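/- Let F: ℍ^{n×n} → ℝ be differentiable (as a function on the real vector space of Hermitian matrices), let Z = β u u* with ‖u‖₂ = 1 and β ∈ ℝ\{0}, and define the pseudo-inner product ⟨A,B⟩_w = ⟨A,B⟩ − (1/2)tr(A)tr(B). Then for every tangent vector V ∈ T_Z (of the form u w* + w u*), ⟨V, ∇F(Z)⟩ = ⟨V, u u* ∇F(Z) + ∇F(Z) u u*⟩_w. Consequently the Riemannian gradient of F at Z with respect to ⟨·,·⟩_w is u u* ∇F(Z) + ∇F(Z) u u*. -/
import Mathlib


open Matrix

private lemma trL' {n : ℕ} (a b : Fin n → ℂ) (M : Matrix (Fin n) (Fin n) ℂ) :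
    (vecMulVec a b * M).trace = b ⬝ᵥ (M *ᵥ a) := by
  simp only [Matrix.trace, Matrix.diag, Matrix.mul_apply, vecMulVec_apply,
    dotProduct, Matrix.mulVec, Finset.mul_sum]
  rw [Finset.sum_comm]
  refine Finset.sum_congr rfl fun k _ => Finset.sum_congr rfl fun i _ => by ring

private lemma vvmul' {n : ℕ} (a b c d : Fin n → ℂ) :
    vecMulVec a b * vecMulVec c d = (b ⬝ᵥ c) • vecMulVec a d := by
  ext i j
  simp [Matrix.mul_apply, vecMulVec_apply, dotProduct, Finset.sum_mul, Finset.mul_sum]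
  refine Finset.sum_congr rfl fun k _ => by ring

private lemma trvv' {n : ℕ} (a b : Fin n → ℂ) : (vecMulVec a b).trace = b ⬝ᵥ a := by
  simp [Matrix.trace, Matrix.diag, vecMulVec_apply, dotProduct, mul_comm]

/-- Let `F` be a differentiable real-valued function on Hermitian matrices with
Euclidean gradient `G = ∇F(Z)` at `Z = β u u*` (`‖u‖ = 1`, `β ≠ 0`), meaning
that along any Hermitian direction `V` the derivative of `s ↦ F(Z + sV)` at `0`
is `⟨V, G⟩ = Re tr(VG)`.  With the pseudo-inner product
`⟨A,B⟩_w = Re tr(AB) − (1/2) tr A · tr B`, every tangent vector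
`V = u w* + w u*` satisfies `⟨V, G⟩ = ⟨V, u u* G + G u u*⟩_w`; hence the
Riemannian gradient of `F` at `Z` w.r.t. `⟨·,·⟩_w` is `u u* G + G u u*`. -/
theorem stmt17 {n : ℕ} (F : Matrix (Fin n) (Fin n) ℂ → ℝ)
    (u : Fin n → ℂ) (hu : star u ⬝ᵥ u = 1) (β : ℝ) (hβ : β ≠ 0)
    (Z G U : Matrix (Fin n) (Fin n) ℂ)
    (hZ : Z = (β : ℂ) • vecMulVec u (star u))
    (hU : U = vecMulVec u (star u))
    (hG : G.IsHermitian)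
    (hgrad : ∀ V : Matrix (Fin n) (Fin n) ℂ, V.IsHermitian →
      HasDerivAt (fun s : ℝ => F (Z + (s : ℂ) • V)) (((V * G).trace).re) 0) :
    ∀ (w : Fin n → ℂ) (V : Matrix (Fin n) (Fin n) ℂ),
      V = vecMulVec u (star w) + vecMulVec w (star u) →
      ((V * G).trace).re
        = ((V * (U * G + G * U)).trace).re
          - (1 / 2) * (V.trace).re * ((U * G + G * U).trace).re := by
  intro w V hV
  set a : ℂ := star w ⬝ᵥ u with ha
  set b : ℂ := star u ⬝ᵥ w with hb
  set p : ℂ := star w ⬝ᵥ (G *ᵥ u) with hp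
  set q : ℂ := star u ⬝ᵥ (G *ᵥ w) with hq
  set t : ℂ := star u ⬝ᵥ (G *ᵥ u) with ht'
  have ht : (U * G).trace = t := by rw [hU, trL']
  -- t is real
  have htstar : star t = t := by
    rw [ht', ← star_dotProduct, star_mulVec, hG.eq, ← dotProduct_mulVec]
  have htim : t.im = 0 := by
    have := congrArg Complex.im htstar
    simp only [Complex.star_def, Complex.conj_im] at this
    linarith
  -- trace of V * G
  have h1 : (V * G).trace = p + q := by
    rw [hV, add_mul, trace_add, trL', trL']
  -- V * U and U * V
  have hVU : V * U = a • U + vecMulVec w (star u) := by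
    rw [hV, hU, add_mul, vvmul', vvmul', hu, one_smul]
  have hUV : U * V = vecMulVec u (star w) + b • U := by
    rw [hV, hU, mul_add, vvmul', vvmul', hu, one_smul]
  -- trace of V * (UG + GU)
  have h2 : (V * (U * G + G * U)).trace = (a + b) * t + (p + q) := by
    have e1 : (V * (U * G)).trace = a * t + q := by
      rw [← mul_assoc, hVU, add_mul, trace_add, Matrix.smul_mul, trace_smul, ht, trL']
      simp [hq, smul_eq_mul]
    have e2 : (V * (G * U)).trace = p + b * t := by
      rw [trace_mul_comm, mul_assoc, trace_mul_comm, hUV, add_mul,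
        trace_add, Matrix.smul_mul, trace_smul, ht, trL']
      simp [hp, smul_eq_mul]
    rw [mul_add, trace_add, e1, e2]
    ring
  -- traces of V and UG + GU
  have h3 : V.trace = a + b := by rw [hV, trace_add, trvv', trvv']
  have h4 : (U * G + G * U).trace = t + t := by
    rw [trace_add, trace_mul_comm G, ht]
  rw [h1, h2, h3, h4]
  simp only [Complex.add_re, Complex.mul_re, htim, mul_zero, zero_mul, sub_zero]
  ring
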